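/- Define H(σ) := (1/2)√(9σ² − 18σ + 25) + (3/2)σ − 5/2 and s(σ) := (1 + 3σ)·√(H(σ)/(1 + 6H(σ) + H(σ)²)), let σ₂ be the unique element of (0,1) with s(σ₂) = 1, and set σ̄₂ := H(σ₂). Then: (i) the FRW characteristic speed λ̃⁺_FRW := √σ₂ satisfies √σ₂ < 1 = s(σ₂); (ii) √(σ̄₂² + 6σ̄₂ + 1) − 2σ̄₂ > 0; and (iii) the TOV characteristic speed λ̃⁺_TOV := −(2 − √(σ̄₂² + 6σ̄₂ + 1))·√σ̄₂ / (√(σ̄₂² + 6σ̄₂ + 1) − 2σ̄₂) satisfies λ̃⁺_TOV < 1 = s(σ₂). Hence the shock speed exceeds the characteristic speeds on both sides of the shock (both families of characteristics cross the shock), and in particular the Lax characteristic condition λ̃⁺_TOV < s < λ̃⁺_FRW fails. -/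
import Mathlib


/-- `H(σ) := (1/2)√(9σ² − 18σ + 25) + (3/2)σ − 5/2`, relating the FRW sound-speed
parameter σ to the TOV sound-speed parameter σ̄ = H(σ). -/
noncomputable def Hfun (σ : ℝ) : ℝ :=
  (1 / 2) * Real.sqrt (9 * σ ^ 2 - 18 * σ + 25) + (3 / 2) * σ - 5 / 2

/-- The shock speed `s(σ) := (1 + 3σ)√(H(σ)/(1 + 6H(σ) + H(σ)²))` in a locally
Minkowskian frame comoving with the FRW fluid. -/
noncomputable def sfun (σ : ℝ) : ℝ :=
  (1 + 3 * σ) * Real.sqrt (Hfun σ / (1 + 6 * Hfun σ + Hfun σ ^ 2))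

/-- at the lightlike value `σ₂` (where `s(σ₂) = 1`, `σ̄₂ = H(σ₂)`):
(i) the FRW characteristic speed `√σ₂` is less than the shock speed `s(σ₂) = 1`;
(ii) `√(σ̄₂² + 6σ̄₂ + 1) − 2σ̄₂ > 0`; (iii) the TOV characteristic speed
`λ̃⁺_TOV = −(2 − √(σ̄₂² + 6σ̄₂ + 1))√σ̄₂/(√(σ̄₂² + 6σ̄₂ + 1) − 2σ̄₂)` is less than the
shock speed; hence both families of characteristics cross the shock and the Lax
characteristic condition fails. -/
theorem stmt_15 (σ₂ : ℝ) (hσ₂ : σ₂ ∈ Set.Ioo (0 : ℝ) 1) (hs : sfun σ₂ = 1) :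
    Real.sqrt σ₂ < sfun σ₂ ∧
    0 < Real.sqrt (Hfun σ₂ ^ 2 + 6 * Hfun σ₂ + 1) - 2 * Hfun σ₂ ∧
    -((2 - Real.sqrt (Hfun σ₂ ^ 2 + 6 * Hfun σ₂ + 1)) * Real.sqrt (Hfun σ₂)) /
        (Real.sqrt (Hfun σ₂ ^ 2 + 6 * Hfun σ₂ + 1) - 2 * Hfun σ₂) < sfun σ₂ := by
  obtain ⟨h0, h1⟩ := hσ₂
  -- facts about r = √(9σ²-18σ+25)
  set r := Real.sqrt (9 * σ₂ ^ 2 - 18 * σ₂ + 25) with hr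
  have hr0 : 0 ≤ r := Real.sqrt_nonneg _
  have hr2 : r ^ 2 = 9 * σ₂ ^ 2 - 18 * σ₂ + 25 := by
    rw [hr, Real.sq_sqrt]; nlinarith [sq_nonneg (3 * σ₂ - 3)]
  have hb0 : 0 < Hfun σ₂ := by
    have : 5 - 3 * σ₂ < r := by nlinarith
    unfold Hfun; rw [← hr]; linarith
  have hb1 : Hfun σ₂ < 1 := by
    have : r < 7 - 3 * σ₂ := by nlinarith
    unfold Hfun; rw [← hr]; linarith
  set b := Hfun σ₂ with hbdef
  set R := Real.sqrt (b ^ 2 + 6 * b + 1) with hR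
  have hR0 : 0 ≤ R := Real.sqrt_nonneg _
  have hR2 : R ^ 2 = b ^ 2 + 6 * b + 1 := by
    rw [hR, Real.sq_sqrt]; nlinarith
  have hii : 0 < R - 2 * b := by nlinarith
  set t := Real.sqrt b with ht
  have ht0 : 0 ≤ t := Real.sqrt_nonneg _
  have ht2 : t ^ 2 = b := by rw [ht, Real.sq_sqrt hb0.le]
  have ht1 : t < 1 := by nlinarith
  refine ⟨?_, hii, ?_⟩
  · rw [hs]
    rw [show (1:ℝ) = Real.sqrt 1 by simp]
    exact Real.sqrt_lt_sqrt h0.le h1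
  · rw [hs, div_lt_one hii]
    have hR1 : 1 ≤ R := by nlinarith
    nlinarith [mul_pos (sub_pos.2 ht1) (show (0:ℝ) < R + 2 * t by linarith)]
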